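/- arXiv:0809.0533 — 3 statements merged into one kernel-verified Lean document; each statement's English description precedes it below -/
import Mathlib

section
/- Fix d ≥ 0, R_p, R_I > 0, and points a, b ∈ ℝ² with dist(a, b) = d. For r_I > 0 let Q(r_I) = ∫_{D(a, r_I + R_p) \ D(b, R_I)} S_I(‖x − a‖, R_p, r_I)/(π R_p²) dx. Then π(r_I² − R_I²) ≤ Q(r_I) ≤ π r_I², and the second inequality is strict whenever d < r_I + R_p + R_I. Consequently, for every μ > 0 the closed-form probability of opportunity F(r_I) = exp(−μ(Q(r_I) + π R_I²)) satisfies exp(−μ π (r_I² + R_I²)) ≤ F(r_I) ≤ exp(−μ π r_I²), with strict left inequality whenever d < r_I + R_p + R_I; i.e., F decreases exponentially in μ with decay constant Q(r_I) + π R_I² lying between π r_I² and π(r_I² + R_I²). -/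
/-!
Write `f x` for the area of `D(x, R_p) ∩ D(a, r_I)`. By Fubini, `∫ f = π r_I² · π R_p²`, and
`f` vanishes outside `D(a, r_I + R_p)`, so `Q(r_I) = π r_I² - (π R_p²)⁻¹ ∫_{D(b, R_I)} f`.
Since `0 ≤ f ≤ π R_p²`, the subtracted term lies in `[0, π R_I²]`; it is positive as soon as
`D(b, R_I)` meets the open disk `B(a, r_I + R_p)`, on which `f > 0`, i.e. when
`d < r_I + R_p + R_I`.
-/

open MeasureTheory Metric Real

/-- `SI d r₁ r₂` is the area (two-dimensional Lebesgue measure) of the intersection of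
two closed disks in the plane of radii `r₁` and `r₂` whose centers are at distance `d`. -/
noncomputable def SI (d r₁ r₂ : ℝ) : ℝ :=
  (volume (closedBall (0 : EuclideanSpace ℝ (Fin 2)) r₁ ∩
    closedBall (EuclideanSpace.single (0 : Fin 2) d) r₂)).toReal

/-- The double integral `Q` appearing in the closed-form probability of opportunity. -/
noncomputable def Qfun (a b : EuclideanSpace ℝ (Fin 2)) (R_p R_I r_I : ℝ) : ℝ :=
  ∫ x in closedBall a (r_I + R_p) \ closedBall b R_I, SI ‖x - a‖ R_p r_I / (π * R_p ^ 2)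

open Set ENNReal

theorem nonempty_ball_inter_ball_of_dist_lt {E : Type*} [NormedAddCommGroup E]
    [NormedSpace ℝ E] {x y : E} {r₁ r₂ : ℝ} (h₁ : 0 < r₁) (h₂ : 0 < r₂)
    (h : dist x y < r₁ + r₂) : (ball x r₁ ∩ ball y r₂).Nonempty := by
  obtain ⟨z, hxz, hzy⟩ := exists_dist_lt_lt h₁ h₂ (by rwa [add_comm])
  exact ⟨z, mem_ball'.2 hxz, mem_ball.2 hzy⟩

theorem measure_closedBall_inter_closedBall_pos {E : Type*} [NormedAddCommGroup E]
    [NormedSpace ℝ E] [MeasurableSpace E] (μ : Measure E) [μ.IsOpenPosMeasure] {x y : E}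
    {r₁ r₂ : ℝ} (h₁ : 0 < r₁) (h₂ : 0 < r₂) (h : dist x y < r₁ + r₂) :
    0 < μ (closedBall x r₁ ∩ closedBall y r₂) :=
  ((isOpen_ball.inter isOpen_ball).measure_pos μ
    (nonempty_ball_inter_ball_of_dist_lt h₁ h₂ h)).trans_le
    (measure_mono (inter_subset_inter ball_subset_closedBall ball_subset_closedBall))

theorem measure_closedBall_inter_le {E : Type*} [NormedAddCommGroup E] [MeasurableSpace E]
    [BorelSpace E] (μ : Measure E) [μ.IsAddHaarMeasure] (x : E) (r : ℝ) (s : Set E) :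
    μ (closedBall x r ∩ s) ≤ μ (closedBall 0 r) :=
  (measure_mono inter_subset_left).trans_eq (Measure.addHaar_closedBall_center μ x r)

section BallOverlap

variable {E : Type*} [NormedAddCommGroup E] [ProperSpace E] [MeasurableSpace E] [BorelSpace E]
  (μ : Measure E) [μ.IsAddHaarMeasure] {s : Set E} (r : ℝ)

theorem measurableSet_dist_le_and_snd_mem (hs : MeasurableSet s) :
    MeasurableSet {p : E × E | dist p.2 p.1 ≤ r ∧ p.2 ∈ s} :=
  ((isClosed_le (continuous_snd.dist continuous_fst) continuous_const).measurableSet).inter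
    (measurable_snd hs)

theorem measurable_measure_closedBall_inter (hs : MeasurableSet s) :
    Measurable fun x => μ (closedBall x r ∩ s) :=
  measurable_measure_prodMk_left (ν := μ) (measurableSet_dist_le_and_snd_mem r hs)

theorem lintegral_measure_closedBall_inter (hs : MeasurableSet s) :
    ∫⁻ x, μ (closedBall x r ∩ s) ∂μ = μ s * μ (closedBall 0 r) := by
  have hT := measurableSet_dist_le_and_snd_mem r hs
  have hslice : ∀ y, μ ((fun x => (x, y)) ⁻¹' {p : E × E | dist p.2 p.1 ≤ r ∧ p.2 ∈ s}) =
      s.indicator (fun _ => μ (closedBall 0 r)) y := by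
    intro y
    by_cases hy : y ∈ s
    · simp only [indicator_of_mem hy, ← Measure.addHaar_closedBall_center μ y r]
      congr 1; ext x; simp [hy, dist_comm]
    · simp [hy]
  calc ∫⁻ x, μ (closedBall x r ∩ s) ∂μ
      = μ.prod μ {p : E × E | dist p.2 p.1 ≤ r ∧ p.2 ∈ s} := (Measure.prod_apply hT).symm
    _ = μ s * μ (closedBall 0 r) := by
      rw [Measure.prod_apply_symm hT, lintegral_congr hslice, lintegral_indicator_const hs,
        mul_comm]

theorem integrable_measure_closedBall_inter_toReal (hs : MeasurableSet s) (hμs : μ s ≠ ∞) :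
    Integrable (fun x => (μ (closedBall x r ∩ s)).toReal) μ :=
  integrable_toReal_of_lintegral_ne_top (measurable_measure_closedBall_inter μ r hs).aemeasurable
    (by
      rw [lintegral_measure_closedBall_inter μ r hs]
      exact mul_ne_top hμs measure_closedBall_lt_top.ne)

theorem integral_measure_closedBall_inter_toReal (hs : MeasurableSet s) :
    ∫ x, (μ (closedBall x r ∩ s)).toReal ∂μ = (μ s).toReal * (μ (closedBall 0 r)).toReal := by
  have hfin (x : E) : μ (closedBall x r ∩ s) < ∞ :=
    (measure_closedBall_inter_le μ x r s).trans_lt measure_closedBall_lt_top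
  rw [integral_toReal (measurable_measure_closedBall_inter μ r hs).aemeasurable (ae_of_all _ hfin),
    lintegral_measure_closedBall_inter μ r hs, toReal_mul]

theorem setIntegral_measure_closedBall_inter_le {t : Set E} (ht : μ t < ∞) :
    ∫ x in t, (μ (closedBall x r ∩ s)).toReal ∂μ ≤
      (μ t).toReal * (μ (closedBall 0 r)).toReal := by
  calc ∫ x in t, (μ (closedBall x r ∩ s)).toReal ∂μ
      ≤ ‖∫ x in t, (μ (closedBall x r ∩ s)).toReal ∂μ‖ := Real.le_norm_self _
    _ ≤ (μ (closedBall 0 r)).toReal * μ.real t := by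
      refine norm_setIntegral_le_of_norm_le_const ht fun x _ => ?_
      rw [Real.norm_eq_abs, abs_of_nonneg toReal_nonneg]
      exact toReal_mono measure_closedBall_lt_top.ne (measure_closedBall_inter_le μ x r s)
    _ = (μ t).toReal * (μ (closedBall 0 r)).toReal := by rw [measureReal_def, mul_comm]

theorem setIntegral_measure_closedBall_inter_closedBall_pos [NormedSpace ℝ E] {y c : E}
    {r r' ρ : ℝ} (hr : 0 < r) (hr' : 0 < r') (hρ : 0 < ρ) (h : dist y c < r + r' + ρ) :
    0 < ∫ x in closedBall c ρ, (μ (closedBall x r ∩ closedBall y r')).toReal ∂μ := by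
  rw [setIntegral_pos_iff_support_of_nonneg_ae (ae_of_all _ fun _ => toReal_nonneg)
    (integrable_measure_closedBall_inter_toReal μ r measurableSet_closedBall
      measure_closedBall_lt_top.ne).integrableOn]
  refine ((isOpen_ball.inter isOpen_ball).measure_pos μ
    (nonempty_ball_inter_ball_of_dist_lt (by positivity) hρ h)).trans_le (measure_mono ?_)
  rintro x ⟨hxy, hxc⟩
  have hfin : μ (closedBall x r ∩ closedBall y r') ≠ ∞ :=
    ((measure_closedBall_inter_le μ x r _).trans_lt measure_closedBall_lt_top).ne
  exact ⟨(toReal_pos (measure_closedBall_inter_closedBall_pos μ hr hr' (mem_ball.1 hxy)).ne'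
    hfin).ne', ball_subset_closedBall hxc⟩

end BallOverlap

theorem volume_closedBall_inter_closedBall_congr {F : Type*} [NormedAddCommGroup F]
    [InnerProductSpace ℝ F] [FiniteDimensional ℝ F] [MeasurableSpace F] [BorelSpace F]
    {x y x' y' : F} (h : dist x y = dist x' y') (r₁ r₂ : ℝ) :
    volume (closedBall x r₁ ∩ closedBall y r₂) =
      volume (closedBall x' r₁ ∩ closedBall y' r₂) := by
  have hmeas (c c' : F) : MeasurableSet (closedBall c r₁ ∩ closedBall c' r₂) :=
    measurableSet_closedBall.inter measurableSet_closedBall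
  have htranslate (c c' : F) : volume (closedBall c r₁ ∩ closedBall c' r₂) =
      volume (closedBall 0 r₁ ∩ closedBall (c' - c) r₂) := by
    rw [← measure_preimage_add _ c, preimage_inter]
    simp [preimage_add_closedBall]
  have hnorm : ‖y' - x'‖ = ‖y - x‖ := by rw [← dist_eq_norm', ← dist_eq_norm', h]
  -- the reflection in the perpendicular bisector of `y' - x'` and `y - x` swaps them
  set L := Submodule.reflection (ℝ ∙ (y' - x' - (y - x)))ᗮ
  have hL : L.symm (y - x) = y' - x' := by
    rw [LinearIsometryEquiv.symm_apply_eq]; exact (Submodule.reflection_sub hnorm).symm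
  rw [htranslate x y, htranslate x' y',
    ← L.measurePreserving.measure_preimage (hmeas _ _).nullMeasurableSet, preimage_inter,
    LinearIsometryEquiv.preimage_closedBall, LinearIsometryEquiv.preimage_closedBall, hL, map_zero]

theorem SI_norm_sub_eq (x a : EuclideanSpace ℝ (Fin 2)) (r₁ r₂ : ℝ) :
    SI ‖x - a‖ r₁ r₂ = (volume (closedBall x r₁ ∩ closedBall a r₂)).toReal := by
  rw [SI, volume_closedBall_inter_closedBall_congr]
  simp [dist_eq_norm]

local notation "ℝ²" => EuclideanSpace ℝ (Fin 2)

theorem volume_closedBall_fin_two_toReal (c : ℝ²) {r : ℝ} (hr : 0 ≤ r) :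
    (volume (closedBall c r)).toReal = π * r ^ 2 := by
  rw [EuclideanSpace.volume_closedBall_fin_two, toReal_mul, toReal_pow, toReal_ofReal hr,
    toReal_ofReal pi_nonneg, mul_comm]

theorem Qfun_eq_sub (a b : ℝ²) {R_p r_I : ℝ} (R_I : ℝ) (hRp : 0 < R_p) (hrI : 0 ≤ r_I) :
    Qfun a b R_p R_I r_I = π * r_I ^ 2 -
      (∫ x in closedBall b R_I, (volume (closedBall x R_p ∩ closedBall a r_I)).toReal) /
        (π * R_p ^ 2) := by
  set g : ℝ² → ℝ := fun x => (volume (closedBall x R_p ∩ closedBall a r_I)).toReal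
  have hg : Integrable g := integrable_measure_closedBall_inter_toReal volume R_p
    measurableSet_closedBall measure_closedBall_lt_top.ne
  have hvanish : ∀ x ∈ (closedBall b R_I)ᶜ \ (closedBall a (r_I + R_p) \ closedBall b R_I),
      g x = 0 := by
    rintro x ⟨hxB, hxA⟩
    have hxa : R_p + r_I < dist x a := by
      by_contra! hle
      exact hxA ⟨mem_closedBall.2 (by linarith), hxB⟩
    simp [g, (closedBall_disjoint_closedBall hxa).inter_eq]
  have hcompl : ∫ x in closedBall a (r_I + R_p) \ closedBall b R_I, g x =
      (∫ x, g x) - ∫ x in closedBall b R_I, g x := by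
    rw [← setIntegral_eq_of_subset_of_forall_sdiff_eq_zero measurableSet_closedBall.compl
      (sdiff_subset_compl _ _) hvanish, setIntegral_compl measurableSet_closedBall hg]
  have htotal : ∫ x, g x = π * r_I ^ 2 * (π * R_p ^ 2) := by
    rw [integral_measure_closedBall_inter_toReal volume R_p measurableSet_closedBall,
      volume_closedBall_fin_two_toReal _ hrI, volume_closedBall_fin_two_toReal _ hRp.le]
  simp_rw [Qfun, SI_norm_sub_eq]
  rw [integral_div, hcompl, htotal]
  field_simp

theorem probOpp_exponential_bounds_general (d R_p R_I : ℝ)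
    (hRp : 0 < R_p) (hRI : 0 < R_I)
    (a b : EuclideanSpace ℝ (Fin 2)) (hab : dist a b = d)
    (r_I : ℝ) (hrI : 0 < r_I) :
    (π * (r_I ^ 2 - R_I ^ 2) ≤ Qfun a b R_p R_I r_I ∧
      Qfun a b R_p R_I r_I ≤ π * r_I ^ 2) ∧
    (d < r_I + R_p + R_I → Qfun a b R_p R_I r_I < π * r_I ^ 2) ∧
    ∀ μ : ℝ, 0 < μ →
      Real.exp (-(μ * (π * (r_I ^ 2 + R_I ^ 2)))) ≤
          Real.exp (-μ * (Qfun a b R_p R_I r_I + π * R_I ^ 2)) ∧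
      Real.exp (-μ * (Qfun a b R_p R_I r_I + π * R_I ^ 2)) ≤
          Real.exp (-(μ * (π * r_I ^ 2))) ∧
      (d < r_I + R_p + R_I →
        Real.exp (-(μ * (π * (r_I ^ 2 + R_I ^ 2)))) <
          Real.exp (-μ * (Qfun a b R_p R_I r_I + π * R_I ^ 2))) := by
  set J := (∫ x in closedBall b R_I, (volume (closedBall x R_p ∩ closedBall a r_I)).toReal) /
    (π * R_p ^ 2)
  have hQ : Qfun a b R_p R_I r_I = π * r_I ^ 2 - J := Qfun_eq_sub a b R_I hRp hrI.le
  have hC : 0 < π * R_p ^ 2 := by positivity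
  have hJ_nonneg : 0 ≤ J := div_nonneg (integral_nonneg fun _ => toReal_nonneg) hC.le
  have hJ_le : J ≤ π * R_I ^ 2 := by
    rw [div_le_iff₀ hC, ← volume_closedBall_fin_two_toReal b hRI.le,
      ← volume_closedBall_fin_two_toReal 0 hRp.le]
    exact setIntegral_measure_closedBall_inter_le volume R_p measure_closedBall_lt_top
  have hQ_lt (hd : d < r_I + R_p + R_I) : Qfun a b R_p R_I r_I < π * r_I ^ 2 := by
    have hJ_pos : 0 < J := div_pos (setIntegral_measure_closedBall_inter_closedBall_pos volume
      hRp hrI hRI (by rw [hab]; linarith)) hC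
    linarith
  refine ⟨⟨by linarith, by linarith⟩, hQ_lt, fun μ hμ => ⟨?_, ?_, fun hd => ?_⟩⟩ <;>
    rw [neg_mul]
  · gcongr; linarith
  · gcongr; linarith
  · gcongr; linarith [hQ_lt hd]

/-- T1.2/T1.3: `π(r_I² − R_I²) ≤ Q ≤ π r_I²` (the latter strictly when
`d < r_I + R_p + R_I`), hence the closed-form probability of opportunity
`F = exp(−μ(Q + π R_I²))` satisfies
`exp(−μπ(r_I² + R_I²)) ≤ F ≤ exp(−μπ r_I²)` with strict left inequality
whenever `d < r_I + R_p + R_I`. -/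
theorem probOpp_exponential_bounds (d R_p R_I : ℝ)
    (hd : 0 ≤ d) (hRp : 0 < R_p) (hRI : 0 < R_I)
    (a b : EuclideanSpace ℝ (Fin 2)) (hab : dist a b = d)
    (r_I : ℝ) (hrI : 0 < r_I) :
    (π * (r_I ^ 2 - R_I ^ 2) ≤ Qfun a b R_p R_I r_I ∧
      Qfun a b R_p R_I r_I ≤ π * r_I ^ 2) ∧
    (d < r_I + R_p + R_I → Qfun a b R_p R_I r_I < π * r_I ^ 2) ∧
    ∀ μ : ℝ, 0 < μ →
      Real.exp (-(μ * (π * (r_I ^ 2 + R_I ^ 2)))) ≤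
          Real.exp (-μ * (Qfun a b R_p R_I r_I + π * R_I ^ 2)) ∧
      Real.exp (-μ * (Qfun a b R_p R_I r_I + π * R_I ^ 2)) ≤
          Real.exp (-(μ * (π * r_I ^ 2))) ∧
      (d < r_I + R_p + R_I →
        Real.exp (-(μ * (π * (r_I ^ 2 + R_I ^ 2)))) <
          Real.exp (-μ * (Qfun a b R_p R_I r_I + π * R_I ^ 2))) :=
  probOpp_exponential_bounds_general d R_p R_I hRp hRI a b hab r_I hrI
end

section
/- Fix R_I > 0, β ∈ (0, 1), γ ∈ (0, 1), and μ > 0; set R_p = β R_I, and for each r_I > 2 R_I set d = γ r_I and r_D = r_I − R_I. Then P_F(r_I) → 0 and P_MD(r_I) → 0 as r_I → ∞; i.e., the closed-form operating point (P_F, P_D) = (P_F, 1 − P_MD) of listen-before-talk with detection range r_D = r_I − R_I approaches the perfect point (0, 1) as r_I/R_I → ∞. (Paper's Theorem 2, large-power regime, stated for the closed-form expressions of Proposition 2.) -/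
open MeasureTheory Metric Real Filter

/-- Closed-form false-alarm probability of listen-before-talk (Proposition 2, eq. (6)):
`P_F = 1 − exp(−μ(π r_D² − S_I(d, r_D, R_I) − ∫_{S_o(r_D)} g))`, where
`g(x) = S_I(‖x − a‖, R_p, r_I)/(π R_p²)` and `S_o(r_D) = D(a, min(r_D, r_I+R_p)) \ D(b, R_I)`. -/
noncomputable def pF (a b : EuclideanSpace ℝ (Fin 2)) (μ R_p R_I r_I d r_D : ℝ) : ℝ :=
  1 - Real.exp (-μ * (π * r_D ^ 2 - SI d r_D R_I -
    ∫ x in closedBall a (min r_D (r_I + R_p)) \ closedBall b R_I,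
      SI ‖x - a‖ R_p r_I / (π * R_p ^ 2)))

/-- Closed-form miss-detection probability of listen-before-talk (Proposition 2, eq. (7)). -/
noncomputable def pMD (a b : EuclideanSpace ℝ (Fin 2)) (μ R_p R_I r_I d r_D : ℝ) : ℝ :=
  (Real.exp (-μ * (π * r_D ^ 2)) -
    Real.exp (-μ * (π * (r_D ^ 2 + R_I ^ 2) - SI d r_D R_I +
      ∫ x in (closedBall a (r_I + R_p) \ closedBall b R_I) \
              (closedBall a (min r_D (r_I + R_p)) \ closedBall b R_I),
        SI ‖x - a‖ R_p r_I / (π * R_p ^ 2)))) /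
  (1 - Real.exp (-μ * ((∫ x in closedBall a (r_I + R_p) \ closedBall b R_I,
      SI ‖x - a‖ R_p r_I / (π * R_p ^ 2)) + π * R_I ^ 2)))

/-!
Once `γ r_I + 2 R_I ≤ r_I`, the disk `D(b, R_I)` lies inside the detection disk
`D(a, r_D)`, and since `R_p ≤ R_I` every disk `D(x, R_p)` with `x ∈ D(a, r_D)` lies inside
`D(a, r_I)`, so the coverage `g` is identically `1` on `S_o(r_D)`. The exponent of `P_F` then
vanishes exactly. In `P_MD` the numerator lies between `0` and `exp(-μ π r_D²)` and the
denominator is at least `1 - exp(-μ π R_I²) > 0`, so `P_MD → 0` as `r_D = r_I - R_I → ∞`.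
-/

lemma measureReal_closedBall_fin_two (x : EuclideanSpace ℝ (Fin 2)) {r : ℝ} (hr : 0 ≤ r) :
    volume.real (closedBall x r) = π * r ^ 2 := by
  rw [measureReal_def, EuclideanSpace.volume_closedBall_fin_two, ← ENNReal.ofReal_pow hr,
    ← ENNReal.ofReal_mul (by positivity), ENNReal.toReal_ofReal (by positivity), mul_comm]

lemma SI_nonneg (d r₁ r₂ : ℝ) : 0 ≤ SI d r₁ r₂ := ENNReal.toReal_nonneg

lemma SI_of_abs_add_le {d r₁ r₂ : ℝ} (hr₂ : 0 ≤ r₂) (h : |d| + r₂ ≤ r₁) :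
    SI d r₁ r₂ = π * r₂ ^ 2 := by
  have hsub : closedBall (EuclideanSpace.single (0 : Fin 2) d) r₂ ⊆ closedBall 0 r₁ :=
    closedBall_subset_closedBall' (by simp; linarith)
  rw [SI, Set.inter_eq_right.mpr hsub, ← measureReal_def, measureReal_closedBall_fin_two _ hr₂]

lemma SI_of_add_abs_le {d r₁ r₂ : ℝ} (hr₁ : 0 ≤ r₁) (h : r₁ + |d| ≤ r₂) :
    SI d r₁ r₂ = π * r₁ ^ 2 := by
  have hsub : closedBall (0 : EuclideanSpace ℝ (Fin 2)) r₁ ⊆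
      closedBall (EuclideanSpace.single (0 : Fin 2) d) r₂ :=
    closedBall_subset_closedBall' (by simp; linarith)
  rw [SI, Set.inter_eq_left.mpr hsub, ← measureReal_def, measureReal_closedBall_fin_two _ hr₁]

lemma setIntegral_SI_div_closedBall_sdiff {a b : EuclideanSpace ℝ (Fin 2)} {R_p r_I ρ s : ℝ}
    (hR_p : 0 < R_p) (hs : 0 ≤ s) (hcover : ρ + R_p ≤ r_I)
    (hsub : closedBall b s ⊆ closedBall a ρ) :
    ∫ x in closedBall a ρ \ closedBall b s, SI ‖x - a‖ R_p r_I / (π * R_p ^ 2) =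
      π * ρ ^ 2 - π * s ^ 2 := by
  have hρ : 0 ≤ ρ := nonempty_closedBall.mp ((nonempty_closedBall.mpr hs).mono hsub)
  have hone : Set.EqOn (fun x => SI ‖x - a‖ R_p r_I / (π * R_p ^ 2)) (fun _ => 1)
      (closedBall a ρ \ closedBall b s) := by
    intro x hx
    have hxa : ‖x - a‖ ≤ ρ := by simpa [dist_eq_norm] using hx.1
    dsimp only
    rw [SI_of_add_abs_le hR_p.le (by rw [abs_norm]; linarith), div_self (by positivity)]
  rw [setIntegral_congr_fun (measurableSet_closedBall.diff measurableSet_closedBall) hone,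
    setIntegral_const, smul_eq_mul, mul_one,
    measureReal_sdiff hsub measurableSet_closedBall measure_closedBall_lt_top.ne,
    measureReal_closedBall_fin_two _ hρ, measureReal_closedBall_fin_two _ hs]

theorem pF_eq_zero {a b : EuclideanSpace ℝ (Fin 2)} {μ R_p R_I r_I d r_D : ℝ}
    (hd : dist a b = d) (hR_p : 0 < R_p) (hR_I : 0 ≤ R_I)
    (hinside : d + R_I ≤ r_D) (hcover : r_D + R_p ≤ r_I) :
    pF a b μ R_p R_I r_I d r_D = 0 := by
  have hmin : min r_D (r_I + R_p) = r_D := min_eq_left (by linarith)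
  have hSI : SI d r_D R_I = π * R_I ^ 2 :=
    SI_of_abs_add_le hR_I (by rwa [abs_of_nonneg (hd ▸ dist_nonneg)])
  have hsub : closedBall b R_I ⊆ closedBall a r_D :=
    closedBall_subset_closedBall' (by rw [dist_comm, hd]; linarith)
  rw [pF, hmin, hSI, setIntegral_SI_div_closedBall_sdiff hR_p hR_I hcover hsub]
  simp

lemma exp_sub_exp_div_one_sub_exp_mem_Icc {μ x J Q c : ℝ} (hμ : 0 < μ) (hJ : 0 ≤ J)
    (hQ : 0 ≤ Q) (hc : 0 < c) :
    (exp (-μ * x) - exp (-μ * (x + J))) / (1 - exp (-μ * (Q + c))) ∈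
      Set.Icc 0 (exp (-μ * x) / (1 - exp (-μ * c))) := by
  have hden : 0 < 1 - exp (-μ * c) :=
    sub_pos.mpr (exp_lt_one_iff.mpr (by nlinarith))
  have hden_le : 1 - exp (-μ * c) ≤ 1 - exp (-μ * (Q + c)) :=
    sub_le_sub_left (exp_le_exp.mpr (by nlinarith)) 1
  have hnum_nonneg : 0 ≤ exp (-μ * x) - exp (-μ * (x + J)) :=
    sub_nonneg.mpr (exp_le_exp.mpr (by nlinarith))
  have hnum_le : exp (-μ * x) - exp (-μ * (x + J)) ≤ exp (-μ * x) :=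
    sub_le_self _ (exp_pos _).le
  exact ⟨div_nonneg hnum_nonneg (hden.trans_le hden_le).le,
    div_le_div₀ (exp_pos _).le hnum_le hden hden_le⟩

theorem pMD_mem_Icc {a b : EuclideanSpace ℝ (Fin 2)} {μ R_p R_I r_I d r_D : ℝ}
    (hd : dist a b = d) (hμ : 0 < μ) (hR_I : 0 < R_I) (hinside : d + R_I ≤ r_D) :
    pMD a b μ R_p R_I r_I d r_D ∈
      Set.Icc 0 (exp (-μ * (π * r_D ^ 2)) / (1 - exp (-μ * (π * R_I ^ 2)))) := by
  have hSI : SI d r_D R_I = π * R_I ^ 2 :=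
    SI_of_abs_add_le hR_I.le (by rwa [abs_of_nonneg (hd ▸ dist_nonneg)])
  have hg : ∀ s, 0 ≤ ∫ x in s, SI ‖x - a‖ R_p r_I / (π * R_p ^ 2) := fun s =>
    integral_nonneg fun x => div_nonneg (SI_nonneg _ _ _) (by positivity)
  rw [pMD, hSI, show π * (r_D ^ 2 + R_I ^ 2) - π * R_I ^ 2 = π * r_D ^ 2 by ring]
  exact exp_sub_exp_div_one_sub_exp_mem_Icc hμ (hg _) (hg _) (by positivity)

lemma tendsto_exp_neg_mul_pi_sub_sq {μ : ℝ} (hμ : 0 < μ) (R : ℝ) :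
    Tendsto (fun r => exp (-μ * (π * (r - R) ^ 2))) atTop (nhds 0) := by
  have hsq : Tendsto (fun r : ℝ => μ * π * (r - R) ^ 2) atTop atTop :=
    ((tendsto_pow_atTop two_ne_zero).comp (tendsto_atTop_add_const_right _ (-R) tendsto_id)
      |>.const_mul_atTop (by positivity))
  refine (tendsto_exp_atBot.comp (tendsto_neg_atTop_atBot.comp hsq)).congr fun r => ?_
  simp only [Function.comp_apply]
  ring_nf

/-- Paper's Theorem 2, large-power regime: with `R_p = β R_I`, `d = γ r_I` and detection
range `r_D = r_I − R_I`, both `P_F → 0` and `P_MD → 0` as `r_I → ∞`. -/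
theorem lbt_perfect_detection_large_power (R_I β γ μ : ℝ)
    (hRI : 0 < R_I) (hβ : β ∈ Set.Ioo (0:ℝ) 1) (hγ : γ ∈ Set.Ioo (0:ℝ) 1) (hμ : 0 < μ)
    (a b : ℝ → EuclideanSpace ℝ (Fin 2))
    (hab : ∀ r_I : ℝ, 2 * R_I < r_I → dist (a r_I) (b r_I) = γ * r_I) :
    Tendsto (fun r_I : ℝ => pF (a r_I) (b r_I) μ (β * R_I) R_I r_I (γ * r_I) (r_I - R_I))
      atTop (nhds 0) ∧
    Tendsto (fun r_I : ℝ => pMD (a r_I) (b r_I) μ (β * R_I) R_I r_I (γ * r_I) (r_I - R_I))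
      atTop (nhds 0) := by
  obtain ⟨hβ0, hβ1⟩ := hβ
  have hγ1 : 0 < 1 - γ := sub_pos.mpr hγ.2
  have hlarge : ∀ᶠ r in atTop, 2 * R_I < r ∧ γ * r + R_I ≤ r - R_I := by
    filter_upwards [eventually_gt_atTop (2 * R_I), eventually_ge_atTop (2 * R_I / (1 - γ))]
      with r h1 h2
    exact ⟨h1, by rw [div_le_iff₀ hγ1] at h2; linarith⟩
  have hMD := hlarge.mono fun r h =>
    pMD_mem_Icc (R_p := β * R_I) (r_I := r) (hab r h.1) hμ hRI h.2
  refine ⟨tendsto_const_nhds.congr' (hlarge.mono fun r h => ?_), ?_⟩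
  · exact (pF_eq_zero (hab r h.1) (by positivity) hRI.le h.2 (by nlinarith)).symm
  · exact tendsto_of_tendsto_of_tendsto_of_le_of_le' tendsto_const_nhds
      (by simpa using (tendsto_exp_neg_mul_pi_sub_sq hμ R_I).div_const _)
      (hMD.mono fun _ h => h.1) (hMD.mono fun _ h => h.2)
end

section
/- Fix r_I, R_p > 0 and μ > 0. Define J(r_D) = ∫₀^{r_D} 2 t · S_I(t, r_I, R_p)/(π R_p²) dt and the closed-form collision probability P_C(r_D) = exp(−μ π r_D²) · (1 − exp(−μ π (r_I² − J(r_D))))/(1 − exp(−μ π r_I²)). Then 0 ≤ J(r_D) ≤ min(r_D², r_I²) for all r_D ≥ 0, and the function r_D ↦ P_C(r_D) is nonincreasing on [0, ∞). -/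
/-!
The area of `closedBall 0 r_I ∩ closedBall x R_p`, integrated over all centres `x ∈ ℝ²`, is
`(π r_I²)(π R_p²)` by Fubini. Since this area depends only on `‖x‖ = t`, where it equals
`S_I(t, r_I, R_p)`, polar coordinates turn the integral into `2π ∫₀^∞ t S_I(t) dt`; hence
`J(∞) = r_I²`. The integrand of `J` lies between `0` and `2t`, so `J` is nondecreasing with
`J(r_D) ≤ min(r_D², r_I²)`. Then `P_C` is the product of the positive nonincreasing factor
`exp(-μπ r_D²)` and the nonnegative nonincreasing factor `1 - exp(-μπ(r_I² - J(r_D)))`,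
divided by a positive constant.
-/

open MeasureTheory Metric Real

/-- `J(r_D) = ∫₀^{r_D} 2 t · S_I(t, r_I, R_p)/(π R_p²) dt`. -/
noncomputable def Jfun (r_I R_p r_D : ℝ) : ℝ :=
  ∫ t in (0:ℝ)..r_D, 2 * t * SI t r_I R_p / (π * R_p ^ 2)

/-- Closed-form collision probability of listen-before-talk (Proposition 3, eq. (14)). -/
noncomputable def pC (r_I R_p μ r_D : ℝ) : ℝ :=
  Real.exp (-μ * (π * r_D ^ 2)) *
    (1 - Real.exp (-μ * (π * (r_I ^ 2 - Jfun r_I R_p r_D)))) /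
    (1 - Real.exp (-μ * (π * r_I ^ 2)))

open Set

local notation "ℝ²" => EuclideanSpace ℝ (Fin 2)

section InvariantMeasure

variable {E : Type*} [NormedAddCommGroup E] [MeasurableSpace E] [BorelSpace E]
  [SecondCountableTopology E]

theorem measurableSet_setOf_snd_mem_inter_closedBall_fst {s : Set E} (hs : MeasurableSet s)
    (r : ℝ) : MeasurableSet {p : E × E | p.2 ∈ s ∩ closedBall p.1 r} :=
  (hs.preimage measurable_snd).inter
    (isClosed_le (continuous_snd.dist continuous_fst) continuous_const).measurableSet

variable (μ : Measure E) [SFinite μ]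

-- Both sides are the `μ.prod μ`-measure of `{(x, y) | y ∈ s ∩ closedBall x r}`, sliced along
-- either factor; the slices `{x | dist y x ≤ r}` all have measure `μ (closedBall 0 r)`.
theorem lintegral_measure_inter_closedBall [μ.IsAddLeftInvariant] {s : Set E}
    (hs : MeasurableSet s) (r : ℝ) :
    ∫⁻ x, μ (s ∩ closedBall x r) ∂μ = μ s * μ (closedBall 0 r) := by
  set T : Set (E × E) := {p | p.2 ∈ s ∩ closedBall p.1 r}
  have hT : MeasurableSet T := measurableSet_setOf_snd_mem_inter_closedBall_fst hs r
  have slice_snd (y : E) :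
      μ ((·, y) ⁻¹' T) = s.indicator (fun _ => μ (closedBall 0 r)) y := by
    by_cases hy : y ∈ s
    · have : (·, y) ⁻¹' T = closedBall y r := by ext x; simp [T, hy, dist_comm]
      rw [indicator_of_mem hy, this, ← measure_preimage_add μ y, preimage_add_closedBall,
        sub_self]
    · simp [T, hy]
  calc ∫⁻ x, μ (s ∩ closedBall x r) ∂μ = μ.prod μ T := (Measure.prod_apply hT).symm
    _ = ∫⁻ y, s.indicator (fun _ => μ (closedBall 0 r)) y ∂μ := by
        simp only [Measure.prod_apply_symm hT, slice_snd]
    _ = μ s * μ (closedBall 0 r) := by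
        rw [lintegral_indicator hs, setLIntegral_const, mul_comm]

theorem measurable_measure_inter_closedBall {s : Set E} (hs : MeasurableSet s) (r : ℝ) :
    Measurable fun x => μ (s ∩ closedBall x r) :=
  measurable_measure_prodMk_left (measurableSet_setOf_snd_mem_inter_closedBall_fst hs r)

end InvariantMeasure

theorem volume_closedBall_inter_closedBall_of_norm_eq {E : Type*} [NormedAddCommGroup E]
    [InnerProductSpace ℝ E] [FiniteDimensional ℝ E] [MeasurableSpace E] [BorelSpace E]
    {x y : E} (h : ‖x‖ = ‖y‖) (r R : ℝ) :
    volume (closedBall 0 r ∩ closedBall x R) = volume (closedBall 0 r ∩ closedBall y R) := by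
  set L : E ≃ₗᵢ[ℝ] E := Submodule.reflection (ℝ ∙ (y - x))ᗮ
  have hL : L.symm x = y := by
    rw [LinearIsometryEquiv.symm_apply_eq]
    exact (Submodule.reflection_sub h.symm).symm
  rw [← L.measurePreserving.measure_preimage
    (measurableSet_closedBall.inter measurableSet_closedBall).nullMeasurableSet,
    preimage_inter, L.preimage_closedBall, L.preimage_closedBall, map_zero, hL]

section Plane

variable (r R : ℝ)

theorem SI_norm_eq_toReal_volume (x : ℝ²) :
    SI ‖x‖ r R = (volume (closedBall (0 : ℝ²) r ∩ closedBall x R)).toReal := by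
  have : ‖EuclideanSpace.single (0 : Fin 2) ‖x‖‖ = ‖x‖ := by simp
  rw [SI, volume_closedBall_inter_closedBall_of_norm_eq this]

theorem SI_nonneg_s16 (d : ℝ) : 0 ≤ SI d r R := ENNReal.toReal_nonneg

variable {R} in
theorem SI_le_pi_mul_sq (hR : 0 ≤ R) (d : ℝ) : SI d r R ≤ π * R ^ 2 := by
  have := ENNReal.toReal_mono measure_closedBall_lt_top.ne
    (measure_mono (μ := volume) (inter_subset_right (s := closedBall (0 : ℝ²) r)
      (t := closedBall (EuclideanSpace.single 0 d) R)))
  simpa [SI, EuclideanSpace.volume_closedBall_fin_two, hR, pi_nonneg, mul_comm] using this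

theorem integrable_SI_norm : Integrable fun x : ℝ² => SI ‖x‖ r R := by
  simp only [SI_norm_eq_toReal_volume]
  refine integrable_toReal_of_lintegral_ne_top
    (measurable_measure_inter_closedBall volume measurableSet_closedBall R).aemeasurable ?_
  rw [lintegral_measure_inter_closedBall volume measurableSet_closedBall]
  exact ENNReal.mul_ne_top measure_closedBall_lt_top.ne measure_closedBall_lt_top.ne

variable {r R} in
theorem integral_SI_norm (hr : 0 ≤ r) (hR : 0 ≤ R) :
    ∫ x : ℝ², SI ‖x‖ r R = π * r ^ 2 * (π * R ^ 2) := by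
  simp only [SI_norm_eq_toReal_volume]
  rw [integral_toReal
    (measurable_measure_inter_closedBall volume measurableSet_closedBall R).aemeasurable
    (.of_forall fun x => (measure_mono inter_subset_left).trans_lt measure_closedBall_lt_top),
    lintegral_measure_inter_closedBall volume measurableSet_closedBall]
  simp only [EuclideanSpace.volume_closedBall_fin_two, ENNReal.toReal_mul, ENNReal.toReal_pow,
    ENNReal.toReal_ofReal, hr, hR, pi_nonneg]
  ring

theorem integrableOn_mul_SI : IntegrableOn (fun t => t * SI t r R) (Ioi 0) := by
  simpa [finrank_euclideanSpace_fin] using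
    (integrable_fun_norm_addHaar (volume : Measure ℝ²) (f := fun t => SI t r R)).1
      (integrable_SI_norm r R)

variable {r R} in
theorem integral_Ioi_mul_SI (hr : 0 ≤ r) (hR : 0 ≤ R) :
    ∫ t in Ioi 0, t * SI t r R = π * r ^ 2 * R ^ 2 / 2 := by
  have h := integral_fun_norm_addHaar (volume : Measure ℝ²) fun t => SI t r R
  simp only [integral_SI_norm hr hR, finrank_euclideanSpace_fin, measureReal_def,
    EuclideanSpace.volume_ball_fin_two, ENNReal.ofReal_one, one_pow, one_mul,
    ENNReal.toReal_ofReal pi_nonneg, Nat.add_one_sub_one, pow_one, smul_eq_mul, nsmul_eq_mul,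
    Nat.cast_ofNat] at h
  rw [eq_div_iff two_ne_zero]
  apply mul_left_cancel₀ pi_ne_zero
  linear_combination -h

end Plane

section DetectionRange

variable {r_I R_p : ℝ}

theorem Jfun_integrand_nonneg {t : ℝ} (ht : 0 ≤ t) :
    0 ≤ 2 * t * SI t r_I R_p / (π * R_p ^ 2) := by
  have := SI_nonneg_s16 r_I R_p t
  positivity

theorem Jfun_integrand_le (hRp : 0 < R_p) {t : ℝ} (ht : 0 ≤ t) :
    2 * t * SI t r_I R_p / (π * R_p ^ 2) ≤ 2 * t := by
  rw [div_le_iff₀ (by positivity)]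
  exact mul_le_mul_of_nonneg_left (SI_le_pi_mul_sq r_I hRp.le t) (by positivity)

theorem integrableOn_Jfun_integrand :
    IntegrableOn (fun t => 2 * t * SI t r_I R_p / (π * R_p ^ 2)) (Ioi 0) := by
  have h := ((integrableOn_mul_SI r_I R_p).const_mul 2).div_const (π * R_p ^ 2)
  simp only [← mul_assoc] at h
  exact h

theorem integral_Ioi_Jfun_integrand (hrI : 0 ≤ r_I) (hRp : 0 < R_p) :
    ∫ t in Ioi 0, 2 * t * SI t r_I R_p / (π * R_p ^ 2) = r_I ^ 2 := by
  simp only [mul_assoc, integral_div, integral_const_mul, integral_Ioi_mul_SI hrI hRp.le]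
  field_simp

theorem intervalIntegrable_Jfun_integrand {r : ℝ} (hr : 0 ≤ r) :
    IntervalIntegrable (fun t => 2 * t * SI t r_I R_p / (π * R_p ^ 2)) volume 0 r :=
  (intervalIntegrable_iff_integrableOn_Ioc_of_le hr).2
    (integrableOn_Jfun_integrand.mono_set Ioc_subset_Ioi_self)

theorem monotoneOn_Jfun : MonotoneOn (Jfun r_I R_p) (Ici 0) := fun _ ha _ hb hab =>
  intervalIntegral.integral_mono_interval le_rfl ha hab
    ((ae_restrict_iff' measurableSet_Ioc).2 (.of_forall fun _ ht => Jfun_integrand_nonneg ht.1.le))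
    (intervalIntegrable_Jfun_integrand hb)

theorem Jfun_nonneg {r : ℝ} (hr : 0 ≤ r) : 0 ≤ Jfun r_I R_p r :=
  (intervalIntegral.integral_same (a := 0)).symm.trans_le (monotoneOn_Jfun self_mem_Ici hr hr)

theorem Jfun_le_sq (hRp : 0 < R_p) {r : ℝ} (hr : 0 ≤ r) : Jfun r_I R_p r ≤ r ^ 2 :=
  calc Jfun r_I R_p r ≤ ∫ t in (0 : ℝ)..r, 2 * t :=
        intervalIntegral.integral_mono_on hr (intervalIntegrable_Jfun_integrand hr)
          ((by fun_prop : Continuous fun t : ℝ => 2 * t).intervalIntegrable 0 r)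
          fun _ ht => Jfun_integrand_le hRp ht.1
    _ = r ^ 2 := by rw [intervalIntegral.integral_const_mul, integral_id]; ring

theorem Jfun_le_sq_radius (hrI : 0 ≤ r_I) (hRp : 0 < R_p) {r : ℝ} (hr : 0 ≤ r) :
    Jfun r_I R_p r ≤ r_I ^ 2 := by
  rw [Jfun, intervalIntegral.integral_of_le hr, ← integral_Ioi_Jfun_integrand hrI hRp]
  exact setIntegral_mono_set integrableOn_Jfun_integrand
    ((ae_restrict_iff' measurableSet_Ioi).2 (.of_forall fun _ ht => Jfun_integrand_nonneg ht.le))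
    Ioc_subset_Ioi_self.eventuallyLE

theorem antitoneOn_pC {μ : ℝ} (hμ : 0 ≤ μ) (hrI : 0 ≤ r_I) (hRp : 0 < R_p) :
    AntitoneOn (pC r_I R_p μ) (Ici 0) := by
  intro x hx y hy hxy
  have hJ : Jfun r_I R_p x ≤ Jfun r_I R_p y := monotoneOn_Jfun hx hy hxy
  have hJy := sub_nonneg.2 (Jfun_le_sq_radius hrI hRp hy)
  have one_sub_exp_neg_nonneg {a : ℝ} (ha : 0 ≤ a) : 0 ≤ 1 - exp (-a) :=
    sub_nonneg.2 (exp_le_one_iff.2 (neg_nonpos.2 ha))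
  rw [mem_Ici] at hx
  simp only [pC, neg_mul]
  gcongr
  · exact one_sub_exp_neg_nonneg (by positivity)
  · exact one_sub_exp_neg_nonneg (by positivity)

end DetectionRange

/-- `0 ≤ J(r_D) ≤ min(r_D², r_I²)`, and the closed-form collision probability `P_C`
is nonincreasing in the detection range `r_D`. -/
theorem pC_anti_in_detection_range (r_I R_p μ : ℝ)
    (hrI : 0 < r_I) (hRp : 0 < R_p) (hμ : 0 < μ) :
    (∀ r_D : ℝ, 0 ≤ r_D →
      0 ≤ Jfun r_I R_p r_D ∧ Jfun r_I R_p r_D ≤ min (r_D ^ 2) (r_I ^ 2)) ∧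
    AntitoneOn (pC r_I R_p μ) (Set.Ici (0:ℝ)) :=
  ⟨fun _ hr => ⟨Jfun_nonneg hr, le_min (Jfun_le_sq hRp hr) (Jfun_le_sq_radius hrI.le hRp hr)⟩,
    antitoneOn_pC hμ.le hrI.le hRp⟩
end
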